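/- arXiv:2105.05618 — 4 statements merged into one kernel-verified Lean document; each statement's English description precedes it below -/
import Mathlib

section
/- For θ₀ ∈ (0, π) and k ≥ 0, the maximum of cos^k(θ_t) · cos^k(θ_r) subject to θ_t, θ_r ∈ (0, π/2) and θ_t + θ_r ≥ θ₀ is attained at θ_t = θ_r = θ₀/2, with maximum value (cos²(θ₀/2))^k = ((1 + cos θ₀)/2)^k. -/
open Real

theorem optimal_orientation (θ₀ k : ℝ) (hθ₀ : θ₀ ∈ Set.Ioo 0 π) (hk : 0 ≤ k) :
    (∀ θt θr : ℝ, θt ∈ Set.Ioo 0 (π / 2) → θr ∈ Set.Ioo 0 (π / 2) →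
      θ₀ ≤ θt + θr →
      Real.cos θt ^ k * Real.cos θr ^ k ≤ ((1 + Real.cos θ₀) / 2) ^ k) ∧
    Real.cos (θ₀ / 2) ^ k * Real.cos (θ₀ / 2) ^ k = ((1 + Real.cos θ₀) / 2) ^ k ∧
    Real.cos (θ₀ / 2) ^ k * Real.cos (θ₀ / 2) ^ k =
      (Real.cos (θ₀ / 2) ^ (2 : ℝ)) ^ k := by
  obtain ⟨h0, hpi⟩ := hθ₀
  have hc : Real.cos (θ₀ / 2) ^ (2 : ℕ) = (1 + Real.cos θ₀) / 2 := by
    have := Real.cos_sq (θ₀ / 2)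
    rw [this]
    rw [mul_div_cancel₀ θ₀ two_ne_zero]
    ring
  have hcos_nonneg : 0 ≤ Real.cos (θ₀ / 2) := by
    apply Real.cos_nonneg_of_mem_Icc
    constructor <;> nlinarith [Real.pi_pos]
  refine ⟨?_, ?_, ?_⟩
  · intro θt θr ⟨ht0, ht1⟩ ⟨hr0, hr1⟩ hsum
    have hct : 0 ≤ Real.cos θt := Real.cos_nonneg_of_mem_Icc ⟨by linarith, ht1.le⟩
    have hcr : 0 ≤ Real.cos θr := Real.cos_nonneg_of_mem_Icc ⟨by linarith, hr1.le⟩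
    rw [← Real.mul_rpow hct hcr]
    apply Real.rpow_le_rpow (mul_nonneg hct hcr) _ hk
    have key : Real.cos (θt + θr) ≤ Real.cos θ₀ := by
      apply Real.cos_le_cos_of_nonneg_of_le_pi h0.le (by linarith) hsum
    have := Real.cos_add θt θr
    have hprod : Real.cos θt * Real.cos θr =
        (Real.cos (θt - θr) + Real.cos (θt + θr)) / 2 := by
      rw [Real.cos_sub, Real.cos_add]; ring
    have hd : Real.cos (θt - θr) ≤ 1 := Real.cos_le_one _
    linarith
  · rw [← Real.mul_rpow hcos_nonneg hcos_nonneg, ← sq, hc]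
  · rw [← Real.mul_rpow hcos_nonneg hcos_nonneg, ← sq,
      Real.rpow_two]
end

section
/- Let a > 0, b > 0, k with 0 < k ≤ 2, and define f(x) = a x⁻¹ + b x + 1/2 and F(x) = x⁻¹ f(x)^{k/2} on the domain {x > 0 : 0 < f(x) < 1}. Then F'(x) < 0 on this domain; that is, F is strictly decreasing (hence quasi-convex/quasilinear). -/
theorem F_strict_decreasing (a b k : ℝ) (ha : 0 < a) (hb : 0 < b)
    (hk0 : 0 < k) (hk2 : k ≤ 2)
    (f F : ℝ → ℝ)
    (hf : ∀ x, f x = a * x⁻¹ + b * x + 1 / 2)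
    (hF : ∀ x, F x = x⁻¹ * f x ^ (k / 2)) :
    ∀ x : ℝ, 0 < x → 0 < f x → f x < 1 → deriv F x < 0 := by
  intro x hx hf0 hf1
  have hxne : x ≠ 0 := ne_of_gt hx
  have hFeq : F = fun x => x⁻¹ * (a * x⁻¹ + b * x + 1 / 2) ^ (k / 2) := by
    funext y; rw [hF y, hf y]
  have hu : (0:ℝ) < a * x⁻¹ + b * x + 1 / 2 := by rw [← hf x]; exact hf0
  set u : ℝ := a * x⁻¹ + b * x + 1 / 2 with hu_def
  -- derivative of inner function
  have hinner : HasDerivAt (fun y : ℝ => a * y⁻¹ + b * y + 1 / 2)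
      (a * (-(x^2)⁻¹) + b) x := by
    have h1 : HasDerivAt (fun y : ℝ => a * y⁻¹) (a * (-(x^2)⁻¹)) x :=
      (hasDerivAt_inv hxne).const_mul a
    have h2 : HasDerivAt (fun y : ℝ => b * y) b x := by
      simpa using (hasDerivAt_id x).const_mul b
    simpa using (h1.add h2).add_const (1/2 : ℝ)
  have hrpow : HasDerivAt (fun y : ℝ => (a * y⁻¹ + b * y + 1 / 2) ^ (k / 2))
      (k / 2 * u ^ (k / 2 - 1) * (a * (-(x^2)⁻¹) + b)) x := by
    have := hinner.rpow_const (p := k / 2) (Or.inl (ne_of_gt hu))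
    convert this using 1
    rw [hu_def]; ring
  have hinv : HasDerivAt (fun y : ℝ => y⁻¹) (-(x^2)⁻¹) x := hasDerivAt_inv hxne
  have hFd : HasDerivAt F
      (-(x^2)⁻¹ * u ^ (k / 2) + x⁻¹ * (k / 2 * u ^ (k / 2 - 1) * (a * (-(x^2)⁻¹) + b))) x := by
    rw [hFeq]
    exact hinv.mul hrpow
  rw [hFd.deriv]
  have hsplit : u ^ (k / 2) = u ^ (k / 2 - 1) * u := by
    have h := Real.rpow_add hu (k / 2 - 1) 1
    rw [Real.rpow_one] at h
    rw [← h]; congr 1; ring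
  rw [hsplit]
  have hup : (0:ℝ) < u ^ (k / 2 - 1) := Real.rpow_pos_of_pos hu _
  have key : -(x^2)⁻¹ * u + x⁻¹ * (k / 2 * (a * (-(x^2)⁻¹) + b)) < 0 := by
    have hxi : (0:ℝ) < x⁻¹ := inv_pos.mpr hx
    have hxx : x * x⁻¹ = 1 := mul_inv_cancel₀ hxne
    have h2 : (x^2)⁻¹ = x⁻¹ * x⁻¹ := by rw [sq, mul_inv]
    rw [h2, hu_def]
    have heq : -(x⁻¹ * x⁻¹) * (a * x⁻¹ + b * x + 1 / 2)
        + x⁻¹ * (k / 2 * (a * (-(x⁻¹ * x⁻¹)) + b))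
        = -((1 + k / 2) * (a * (x⁻¹ * x⁻¹ * x⁻¹)) + (x⁻¹ * x⁻¹) / 2
            + (1 - k / 2) * (b * x⁻¹)) := by
      field_simp
      ring
    rw [heq]
    have h1 : 0 < (1 + k / 2) * (a * (x⁻¹ * x⁻¹ * x⁻¹)) := by positivity
    have h2' : 0 < (x⁻¹ * x⁻¹) / 2 := by positivity
    have h3 : 0 ≤ (1 - k / 2) * (b * x⁻¹) := by
      apply mul_nonneg (by linarith) (by positivity)
    linarith
  calc -(x^2)⁻¹ * (u ^ (k / 2 - 1) * u) + x⁻¹ * (k / 2 * u ^ (k / 2 - 1) * (a * (-(x^2)⁻¹) + b))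
      = u ^ (k / 2 - 1) * (-(x^2)⁻¹ * u + x⁻¹ * (k / 2 * (a * (-(x^2)⁻¹) + b))) := by ring
    _ < 0 := mul_neg_of_pos_of_neg hup key
end

section
/- Let a > 0, b > 0, k > 2, and define f(x) = a x⁻¹ + b x + 1/2 and F(x) = x⁻¹ f(x)^{k/2} for x > 0 with f(x) > 0. At any critical point x₀ > 0 of F (i.e., where f(x₀) = (k/2)·x₀·f'(x₀) with f'(x) = −a x⁻² + b), the second derivative satisfies F''(x₀) > 0; in particular every critical point of F is a strict local minimum, so F is quasi-convex on (0, ∞). -/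
lemma aux_f_deriv (a b : ℝ) {x : ℝ} (hx : x ≠ 0) :
    HasDerivAt (fun y : ℝ => a * y⁻¹ + b * y + 1 / 2) (b - a * (x ^ 2)⁻¹) x := by
  have h := (((hasDerivAt_inv hx).const_mul a).add ((hasDerivAt_id x).const_mul b)).add_const
    (1 / 2 : ℝ)
  refine h.congr_deriv ?_
  ring

lemma aux_g_deriv (a b k : ℝ) {x : ℝ} (hx : x ≠ 0) :
    HasDerivAt (fun y : ℝ => (k/2-1)*b*y - (k/2+1)*a*y⁻¹ - 1/2)
      ((k/2-1)*b + (k/2+1)*a*(x ^ 2)⁻¹) x := by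
  have h := (((hasDerivAt_id x).const_mul ((k/2-1)*b)).sub
    ((hasDerivAt_inv hx).const_mul ((k/2+1)*a))).sub_const (1/2 : ℝ)
  refine h.congr_deriv ?_
  ring

lemma aux_F_deriv (a b k : ℝ) (f F : ℝ → ℝ)
    (hf : ∀ x, f x = a * x⁻¹ + b * x + 1 / 2)
    (hF : ∀ x, F x = x⁻¹ * f x ^ (k / 2)) {x : ℝ} (hx : 0 < x) (hfx : 0 < f x) :
    HasDerivAt F ((x ^ 2)⁻¹ * f x ^ (k/2-1) * ((k/2-1)*b*x - (k/2+1)*a*x⁻¹ - 1/2)) x := by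
  have hx0 : x ≠ 0 := ne_of_gt hx
  have hfe : f = fun y => a * y⁻¹ + b * y + 1 / 2 := funext hf
  have hFe : F = fun y => y⁻¹ * f y ^ (k / 2) := funext hF
  have h2 : HasDerivAt (fun y => f y ^ (k/2))
      ((b - a * (x ^ 2)⁻¹) * (k/2) * f x ^ (k/2 - 1)) x := by
    have hfd : HasDerivAt f (b - a * (x ^ 2)⁻¹) x := by
      rw [hfe]; exact aux_f_deriv a b hx0
    exact hfd.rpow_const (Or.inl hfx.ne')
  have h3 := (hasDerivAt_inv hx0).mul h2
  rw [hFe]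
  refine h3.congr_deriv ?_
  have hsplit : f x ^ (k/2) = f x ^ (k/2-1) * f x := by
    rw [← Real.rpow_add_one hfx.ne' (k/2-1)]
    ring_nf
  rw [hsplit, hf x]
  field_simp
  ring

theorem F_second_deriv_pos_and_quasiconvex (a b k : ℝ) (ha : 0 < a) (hb : 0 < b)
    (hk : 2 < k)
    (f F : ℝ → ℝ)
    (hf : ∀ x, f x = a * x⁻¹ + b * x + 1 / 2)
    (hF : ∀ x, F x = x⁻¹ * f x ^ (k / 2)) :
    (∀ x₀ : ℝ, 0 < x₀ → 0 < f x₀ →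
      f x₀ = (k / 2) * x₀ * (-a * (x₀ ^ 2)⁻¹ + b) →
      0 < deriv (deriv F) x₀ ∧ IsLocalMin F x₀) ∧
    QuasiconvexOn ℝ (Set.Ioi 0) F := by
  have hk1 : 0 < k/2 - 1 := by linarith
  have hk2 : 0 < k/2 + 1 := by linarith
  set g : ℝ → ℝ := fun y => (k/2-1)*b*y - (k/2+1)*a*y⁻¹ - 1/2 with hgdef
  set G : ℝ → ℝ := fun y => (y ^ 2)⁻¹ * f y ^ (k/2-1) * g y with hGdef
  have hfpos : ∀ x : ℝ, 0 < x → 0 < f x := by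
    intro x hx; rw [hf]; positivity
  have hFd : ∀ x : ℝ, 0 < x → HasDerivAt F (G x) x := fun x hx =>
    aux_F_deriv a b k f F hf hF hx (hfpos x hx)
  -- strict monotonicity of g on Ioi 0
  have hg_mono : StrictMonoOn g (Set.Ioi 0) := by
    intro x hx y hy hxy
    simp only [hgdef, Set.mem_Ioi] at *
    have hinv : y⁻¹ < x⁻¹ := by
      rw [inv_lt_inv₀ (lt_trans hx hxy) hx]; exact hxy
    nlinarith [mul_pos hk1 hb, mul_pos hk2 ha]
  -- find root c of g
  set x₁ : ℝ := min 1 (1/(2*((k/2-1)*b))) with hx₁def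
  set x₂ : ℝ := max 1 (((k/2+1)*a + 1)/((k/2-1)*b)) with hx₂def
  have hc1 : 0 < (k/2-1)*b := mul_pos hk1 hb
  have hx₁pos : 0 < x₁ := lt_min one_pos (by positivity)
  have hx₁₂ : x₁ ≤ x₂ := le_trans (min_le_left _ _) (le_max_left _ _)
  have hgx₁ : g x₁ < 0 := by
    have h1 : (k/2-1)*b*x₁ ≤ 1/2 := by
      have : x₁ ≤ 1/(2*((k/2-1)*b)) := min_le_right _ _
      rw [le_div_iff₀ (by positivity)] at this
      nlinarith
    have h2 : 0 < (k/2+1)*a*x₁⁻¹ := by positivity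
    simp only [hgdef]
    nlinarith
  have hgx₂ : 0 < g x₂ := by
    have h1 : ((k/2+1)*a + 1) ≤ (k/2-1)*b*x₂ := by
      have : ((k/2+1)*a + 1)/((k/2-1)*b) ≤ x₂ := le_max_right _ _
      rw [div_le_iff₀ hc1] at this
      nlinarith
    have h2 : (k/2+1)*a*x₂⁻¹ ≤ (k/2+1)*a := by
      have hx₂1 : 1 ≤ x₂ := le_max_left _ _
      have : x₂⁻¹ ≤ 1 := inv_le_one_of_one_le₀ hx₂1
      nlinarith [mul_pos hk2 ha]
    simp only [hgdef]
    nlinarith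
  have hgcont : ContinuousOn g (Set.Icc x₁ x₂) := by
    intro x hx
    have hx0 : x ≠ 0 := ne_of_gt (lt_of_lt_of_le hx₁pos hx.1)
    exact ((aux_g_deriv a b k hx0).continuousAt).continuousWithinAt
  obtain ⟨c, hcmem, hgc⟩ := intermediate_value_Icc hx₁₂ hgcont
    ⟨le_of_lt hgx₁, le_of_lt hgx₂⟩
  have hcpos : 0 < c := lt_of_lt_of_le hx₁pos hcmem.1
  -- sign of G
  have hGsign : ∀ x : ℝ, 0 < x → (g x < 0 → G x < 0) ∧ (0 < g x → 0 < G x) := by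
    intro x hx
    have h1 : 0 < (x ^ 2)⁻¹ * f x ^ (k/2-1) := by
      have := Real.rpow_pos_of_pos (hfpos x hx) (k/2-1)
      positivity
    simp only [hGdef]
    exact ⟨fun h => mul_neg_of_pos_of_neg h1 h, fun h => mul_pos h1 h⟩
  have hderivF : ∀ x : ℝ, 0 < x → deriv F x = G x := fun x hx => (hFd x hx).deriv
  -- antitone on Ioc 0 c, monotone on Ici c
  have hant : AntitoneOn F (Set.Ioc 0 c) := by
    apply antitoneOn_of_deriv_nonpos (convex_Ioc 0 c)
    · intro x hx; exact ((hFd x hx.1).continuousAt).continuousWithinAt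
    · intro x hx
      rw [interior_Ioc] at hx
      exact ((hFd x hx.1).differentiableAt).differentiableWithinAt
    · intro x hx
      rw [interior_Ioc] at hx
      rw [hderivF x hx.1]
      have : g x < g c := hg_mono (Set.mem_Ioi.mpr hx.1) (Set.mem_Ioi.mpr hcpos) hx.2
      rw [hgc] at this
      exact le_of_lt ((hGsign x hx.1).1 this)
  have hmono : MonotoneOn F (Set.Ici c) := by
    apply monotoneOn_of_deriv_nonneg (convex_Ici c)
    · intro x hx
      exact ((hFd x (lt_of_lt_of_le hcpos hx)).continuousAt).continuousWithinAt
    · intro x hx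
      rw [interior_Ici] at hx
      exact ((hFd x (lt_trans hcpos hx)).differentiableAt).differentiableWithinAt
    · intro x hx
      rw [interior_Ici] at hx
      have hx0 : 0 < x := lt_trans hcpos hx
      rw [hderivF x hx0]
      have : g c < g x := hg_mono (Set.mem_Ioi.mpr hcpos) (Set.mem_Ioi.mpr hx0) hx
      rw [hgc] at this
      exact le_of_lt ((hGsign x hx0).2 this)
  constructor
  · intro x₀ hx₀ hfx₀ hcrit
    have hx₀0 : x₀ ≠ 0 := ne_of_gt hx₀
    have hgx₀ : g x₀ = 0 := by
      rw [hf x₀] at hcrit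
      have e1 : (x₀ ^ 2)⁻¹ = x₀⁻¹ * x₀⁻¹ := by rw [sq, mul_inv]
      rw [e1] at hcrit
      have hu : x₀ * x₀⁻¹ = 1 := mul_inv_cancel₀ hx₀0
      simp only [hgdef]
      linear_combination (-1 : ℝ) * hcrit + (k/2)*a*x₀⁻¹ * hu
    constructor
    · -- second derivative positive
      have hEq : deriv F =ᶠ[nhds x₀] G :=
        Filter.eventually_of_mem (isOpen_Ioi.mem_nhds (Set.mem_Ioi.mpr hx₀))
          (fun x hx => hderivF x hx)
      have hGd : HasDerivAt G
          (((-(2 * x₀ ^ 1) / (x₀ ^ 2) ^ 2) * f x₀ ^ (k/2-1) +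
            (x₀ ^ 2)⁻¹ * ((b - a * (x₀ ^ 2)⁻¹) * (k/2-1) * f x₀ ^ (k/2-1-1))) * g x₀ +
           (x₀ ^ 2)⁻¹ * f x₀ ^ (k/2-1) * ((k/2-1)*b + (k/2+1)*a*(x₀ ^ 2)⁻¹)) x₀ := by
        have hu : HasDerivAt (fun y : ℝ => (y ^ 2)⁻¹) (-(2 * x₀ ^ 1) / (x₀ ^ 2) ^ 2) x₀ := by
          have := (hasDerivAt_pow 2 x₀).inv (pow_ne_zero 2 hx₀0)
          refine this.congr_deriv ?_
          norm_num
        have hv : HasDerivAt (fun y => f y ^ (k/2-1))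
            ((b - a * (x₀ ^ 2)⁻¹) * (k/2-1) * f x₀ ^ (k/2-1-1)) x₀ := by
          have hfd : HasDerivAt f (b - a * (x₀ ^ 2)⁻¹) x₀ := by
            rw [funext hf]; exact aux_f_deriv a b hx₀0
          exact hfd.rpow_const (Or.inl hfx₀.ne')
        have hw : HasDerivAt g ((k/2-1)*b + (k/2+1)*a*(x₀ ^ 2)⁻¹) x₀ := by
          rw [hgdef]; exact aux_g_deriv a b k hx₀0
        exact (hu.mul hv).mul hw
      rw [hEq.deriv_eq, hGd.deriv, hgx₀, mul_zero, zero_add]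
      have hrp : 0 < f x₀ ^ (k/2-1) := Real.rpow_pos_of_pos hfx₀ _
      have h4 : 0 < (k/2-1)*b + (k/2+1)*a*(x₀ ^ 2)⁻¹ := by
        have : 0 < (k/2+1)*a*(x₀ ^ 2)⁻¹ := by positivity
        nlinarith
      positivity
    · -- local min
      have hx₀c : x₀ = c :=
        hg_mono.injOn (Set.mem_Ioi.mpr hx₀) (Set.mem_Ioi.mpr hcpos) (by rw [hgx₀, hgc])
      subst hx₀c
      filter_upwards [isOpen_Ioi.mem_nhds (Set.mem_Ioi.mpr hx₀)] with y hy
      rcases le_total y x₀ with h | h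
      · exact hant ⟨hy, h⟩ ⟨hx₀, le_refl _⟩ h
      · exact hmono (Set.mem_Ici.mpr (le_refl _)) (Set.mem_Ici.mpr h) h
  · -- quasiconvex
    intro r
    have hoc : Set.OrdConnected {x ∈ Set.Ioi (0:ℝ) | F x ≤ r} := by
      constructor
      rintro x ⟨hx0, hxr⟩ z ⟨hz0, hzr⟩ y hy
      refine ⟨lt_of_lt_of_le hx0 hy.1, ?_⟩
      rcases le_total y c with h | h
      · have : F y ≤ F x := hant ⟨hx0, le_trans hy.1 h⟩
          ⟨lt_of_lt_of_le hx0 hy.1, h⟩ hy.1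
        exact le_trans this hxr
      · have : F y ≤ F z := hmono (Set.mem_Ici.mpr h)
          (Set.mem_Ici.mpr (le_trans h hy.2)) hy.2
        exact le_trans this hzr
    exact hoc.convex
end

section
/- Let f(x) = a x⁻¹ + b x + 1/2 with a > 0, b > 0, k > 2, and x₀ > 0 a critical point satisfying f(x₀) = (k/2) x₀ f'(x₀). Then h(x₀) := f(x₀)² − (k/2) x₀² f'(x₀)² + (k/2) x₀² f(x₀) f''(x₀) = (k²/4 − k/2) x₀² f'(x₀)² + k a x₀⁻¹ f(x₀), and this quantity is strictly positive. -/
theorem second_deriv_core_identity (a b k x₀ : ℝ) (ha : 0 < a) (hb : 0 < b)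
    (hk : 2 < k) (hx₀ : 0 < x₀)
    (fx f'x f''x : ℝ)
    (hfx : fx = a * x₀⁻¹ + b * x₀ + 1 / 2)
    (hf'x : f'x = -a * (x₀ ^ 2)⁻¹ + b)
    (hf''x : f''x = 2 * a * (x₀ ^ 3)⁻¹)
    (hcrit : fx = (k / 2) * x₀ * f'x) :
    fx ^ 2 - (k / 2) * x₀ ^ 2 * f'x ^ 2 + (k / 2) * x₀ ^ 2 * fx * f''x =
      (k ^ 2 / 4 - k / 2) * x₀ ^ 2 * f'x ^ 2 + k * a * x₀⁻¹ * fx ∧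
    0 < (k ^ 2 / 4 - k / 2) * x₀ ^ 2 * f'x ^ 2 + k * a * x₀⁻¹ * fx := by
  have hx : x₀ ≠ 0 := ne_of_gt hx₀
  have hfxpos : 0 < fx := by
    rw [hfx]; positivity
  constructor
  · rw [hf''x, hcrit]
    field_simp
    ring
  · have h1 : 0 < k ^ 2 / 4 - k / 2 := by nlinarith
    have h2 : 0 < k * a * x₀⁻¹ * fx := by positivity
    nlinarith [mul_nonneg (mul_nonneg h1.le (sq_nonneg x₀)) (sq_nonneg f'x)]
end
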